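/- Let $0 < \lambda < n$, let $\mathscr{D}$ be a dyadic grid in $\mathbb{R}^n$, and let $i, j \geq 0$ be integers. Let $S^{i,j}_{\lambda}$ be a fractional dyadic shift: $S^{i,j}_{\lambda} f = \sum_{K \in \mathscr{D}} \sum_{I^{(i)} = K, J^{(j)} = K} a_{I,J,K} \langle f, h_I \rangle h_J$ with coefficients $|a_{I,J,K}| \leq |I|^{1/2}|J|^{1/2}/|K|^{\lambda/n}$. Then for every $f$ and a.e. $x$, $|S^{i,j}_{\lambda} f(x)| \lesssim_{\lambda,n} I_{\lambda}|f|(x)$. -/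

import Mathlib

open MeasureTheory ENNReal Set
noncomputable section

/-- An axis-parallel cube in `ℝⁿ`, given by its lower-left corner and (positive) side length. -/
structure Cube (n : ℕ) where
  corner : EuclideanSpace ℝ (Fin n)
  side : ℝ
  side_pos : 0 < side

namespace Cube
variable {n : ℕ}

/-- The (half-open) cube as a subset of `ℝⁿ`. -/
def set (I : Cube n) : Set (EuclideanSpace ℝ (Fin n)) :=
  {x | ∀ i, I.corner i ≤ x i ∧ x i < I.corner i + I.side}

/-- The volume `|I| = ℓ(I)^n` of the cube. -/
def vol (I : Cube n) : ℝ := I.side ^ n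

/-- The center of the cube. -/
def center (I : Cube n) : EuclideanSpace ℝ (Fin n) := WithLp.toLp 2 (fun i => I.corner i + I.side / 2)

end Cube

/-- A dyadic grid in `ℝⁿ`: all cubes have dyadic side lengths, the cubes of each fixed
side length `2^(-k)` partition `ℝⁿ`, and any two cubes are nested or disjoint. -/
def IsDyadicGrid {n : ℕ} (D : _root_.Set (Cube n)) : Prop :=
  (∀ I ∈ D, ∃ k : ℤ, I.side = (2 : ℝ) ^ (-k)) ∧
  (∀ k : ℤ, ∀ x : EuclideanSpace ℝ (Fin n),
    ∃! I : Cube n, I ∈ D ∧ I.side = (2 : ℝ) ^ (-k) ∧ x ∈ I.set) ∧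
  (∀ I ∈ D, ∀ J ∈ D, I.set ⊆ J.set ∨ J.set ⊆ I.set ∨ Disjoint I.set J.set)

/-- One-dimensional Haar function on the interval `[c, c+s)`; `η = false` gives the
non-cancellative `h⁰ = s^{-1/2} 1`, `η = true` the cancellative `h¹`. -/
def haar1 (c s : ℝ) (η : Bool) (t : ℝ) : ℝ :=
  if η then
    (if t ∈ Set.Ico c (c + s / 2) then s ^ (-(1:ℝ)/2)
     else if t ∈ Set.Ico (c + s / 2) (c + s) then -(s ^ (-(1:ℝ)/2)) else 0)
  else (if t ∈ Set.Ico c (c + s) then s ^ (-(1:ℝ)/2) else 0)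

/-- Tensor-product Haar function `h_I^η` on a cube `I ⊂ ℝⁿ`, with signature `η`. -/
def haarCube {n : ℕ} (I : Cube n) (η : Fin n → Bool) (x : EuclideanSpace ℝ (Fin n)) : ℝ :=
  ∏ i, haar1 (I.corner i) I.side (η i) (x i)

/-- The average `⟨g⟩_I = |I|⁻¹ ∫_I g`. -/
def cavg {n : ℕ} (g : EuclideanSpace ℝ (Fin n) → ℝ) (I : Cube n) : ℝ :=
  (1 / I.vol) * ∫ x in I.set, g x

/-- The martingale difference `Δ_I g = ∑_{I' child of I} ⟨g⟩_{I'} 1_{I'} - ⟨g⟩_I 1_I`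
associated with a cube `I` of the dyadic grid `D`. -/
def mdiff {n : ℕ} (D : _root_.Set (Cube n)) (I : Cube n)
    (g : EuclideanSpace ℝ (Fin n) → ℝ) (x : EuclideanSpace ℝ (Fin n)) : ℝ :=
  (∑' I' : {I' : Cube n // I' ∈ D ∧ I'.set ⊆ I.set ∧ I'.side = I.side / 2},
    Set.indicator I'.1.set (fun _ => cavg g I'.1) x) -
  Set.indicator I.set (fun _ => cavg g I) x

/-- The distance between two sets. -/
def setDist {α : Type*} [PseudoMetricSpace α] (A B : _root_.Set α) : ℝ :=
  sInf (Set.image2 dist A B)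

/-- The mixed norm `‖f‖_{L^{p₂}(L^{p₁})(μ₂ × μ₁)}` of an `ℝ≥0∞`-valued function,
inner exponent `p₁` (first variable), outer exponent `p₂` (second variable). -/
def mnorm {E F : Type*} [MeasurableSpace E] [MeasurableSpace F] (p₁ p₂ : ℝ)
    (μ₁ : Measure E) (μ₂ : Measure F) (g : E → F → ℝ≥0∞) : ℝ≥0∞ :=
  (∫⁻ x₂, (∫⁻ x₁, g x₁ x₂ ^ p₁ ∂μ₁) ^ (p₂ / p₁) ∂μ₂) ^ (1 / p₂)

/-- The measure `w^e dx` on `ℝⁿ`. -/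
def wMeasure {n : ℕ} (w : EuclideanSpace ℝ (Fin n) → ℝ) (e : ℝ) :
    Measure (EuclideanSpace ℝ (Fin n)) :=
  volume.withDensity fun x => ENNReal.ofReal (w x ^ e)

/-- `v ∈ A_r(ℝⁿ)` with constant at most `A`:
`⟨v⟩_Q ⟨v^{1-r'}⟩_Q^{r-1} ≤ A` for every cube `Q`. -/
def MemAp {n : ℕ} (r : ℝ) (v : EuclideanSpace ℝ (Fin n) → ℝ) (A : ℝ) : Prop :=
  ∀ Q : Cube n, cavg v Q * (cavg (fun x => v x ^ (1 - r / (r - 1))) Q) ^ (r - 1) ≤ A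

/-- The `A_{a,b}` characteristic `[w]_{A_{a,b}} = sup_Q ⟨w^b⟩_Q ⟨w^{-a'}⟩_Q^{b/a'}`. -/
def ApqConst {n : ℕ} (a b : ℝ) (w : EuclideanSpace ℝ (Fin n) → ℝ) : ℝ≥0∞ :=
  ⨆ Q : Cube n, ENNReal.ofReal
    (cavg (fun x => w x ^ b) Q * (cavg (fun x => w x ^ (-(a / (a - 1)))) Q) ^ (b * (a - 1) / a))

/-!
Fix `x`. A term `(K, I, J)` of the shift vanishes unless `x ∈ J ⊆ K`, and then `K` and `J` are
the dyadic cubes of their scales containing `x`, so the term is determined by the scale `k` of `K`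
and by `I`. The coefficient bound and `|h_Q| ≤ |Q|^{-1/2} 1_Q` reduce the term to
`ℓ(K)^{-λ} ∫_I |f|`; the descendants `I` of `K` of a fixed generation are disjoint, so summing over
them gives `ℓ(K)^{-λ} ∫_K |f|`, and summing over the cubes `K ∋ x` gives `∫ W(x, y) |f(y)| dy`
with `W(x, y) = ∑_{K ∋ x, y} ℓ(K)^{-λ}`. A cube containing `x` and `y` has side at least
`|x - y| / √n`, so this geometric series is `≲ |x - y|^{-λ}`. Only the superadditivity of the lower
Lebesgue integral is used, so `f` need not be measurable.
-/

theorem ENNReal.tsum_le_tsum_of_injOn {α β : Type*} {f : α → ℝ≥0∞} {g : β → ℝ≥0∞} (e : α → β)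
    (he : InjOn e (Function.support f)) (hfg : ∀ a ∈ Function.support f, f a ≤ g (e a)) :
    ∑' a, f a ≤ ∑' b, g b :=
  calc ∑' a, f a = ∑' a : Function.support f, f a := (tsum_subtype_support f).symm
    _ ≤ ∑' a : Function.support f, g (e a) := ENNReal.tsum_le_tsum fun a => hfg a a.2
    _ ≤ ∑' b, g b := tsum_comp_le_tsum_of_injective he.injective g

section LowerIntegral

variable {α ι : Type*} [MeasurableSpace α] {μ : Measure α}

theorem sum_lintegral_le_lintegral_sum (s : Finset ι) (f : ι → α → ℝ≥0∞) :
    ∑ k ∈ s, ∫⁻ y, f k y ∂μ ≤ ∫⁻ y, ∑ k ∈ s, f k y ∂μ := by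
  classical
  induction s using Finset.induction_on with
  | empty => simp
  | insert k s hk ih =>
    simp only [Finset.sum_insert hk]
    exact (add_le_add le_rfl ih).trans (le_lintegral_add _ _)

theorem tsum_lintegral_le_lintegral_tsum (f : ι → α → ℝ≥0∞) :
    ∑' k, ∫⁻ y, f k y ∂μ ≤ ∫⁻ y, ∑' k, f k y ∂μ := by
  rw [ENNReal.tsum_eq_iSup_sum]
  exact iSup_le fun s => (sum_lintegral_le_lintegral_sum s f).trans
    (lintegral_mono fun y => ENNReal.sum_le_tsum s)

theorem tsum_mul_setLIntegral_le {A : ι → Set α} (hA : ∀ k, MeasurableSet (A k))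
    (c : ι → ℝ≥0∞) (g : α → ℝ≥0∞) :
    ∑' k, c k * ∫⁻ y in A k, g y ∂μ ≤
      ∫⁻ y, (∑' k, (A k).indicator (fun _ => c k) y) * g y ∂μ := by
  calc ∑' k, c k * ∫⁻ y in A k, g y ∂μ
      ≤ ∑' k, ∫⁻ y, (A k).indicator (fun _ => c k) y * g y ∂μ := by
        refine ENNReal.tsum_le_tsum fun k => ?_
        rw [← lintegral_indicator (hA k)]
        refine (lintegral_const_mul_le _ _).trans_eq (lintegral_congr fun y => ?_)
        by_cases hy : y ∈ A k <;> simp [hy]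
    _ ≤ ∫⁻ y, ∑' k, (A k).indicator (fun _ => c k) y * g y ∂μ :=
        tsum_lintegral_le_lintegral_tsum _
    _ = ∫⁻ y, (∑' k, (A k).indicator (fun _ => c k) y) * g y ∂μ := by
        simp_rw [ENNReal.tsum_mul_right]

theorem tsum_setLIntegral_le_of_pairwiseDisjoint {s : ι → Set α} (hs : ∀ k, MeasurableSet (s k))
    (hdisj : Pairwise (Function.onFun Disjoint s)) {t : Set α} (ht : MeasurableSet t)
    (hst : ∀ k, s k ⊆ t) (g : α → ℝ≥0∞) :
    ∑' k, ∫⁻ y in s k, g y ∂μ ≤ ∫⁻ y in t, g y ∂μ := by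
  calc ∑' k, ∫⁻ y in s k, g y ∂μ = ∑' k, μ.withDensity g (s k) := by
        simp_rw [withDensity_apply g (hs _)]
    _ ≤ μ.withDensity g (⋃ k, s k) := tsum_meas_le_meas_iUnion_of_disjoint _ hs hdisj
    _ ≤ μ.withDensity g t := measure_mono (iUnion_subset hst)
    _ = ∫⁻ y in t, g y ∂μ := withDensity_apply g ht

end LowerIntegral

theorem one_sub_two_rpow_neg_pos {lam : ℝ} (hlam : 0 < lam) : 0 < 1 - (2:ℝ) ^ (-lam) :=
  sub_pos.mpr (Real.rpow_lt_one_of_one_lt_of_neg one_lt_two (neg_neg_of_pos hlam))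

theorem tsum_dyadic_rpow_neg_le {lam r : ℝ} (hlam : 0 < lam) (hr : 0 < r) :
    ∑' k : ℤ, (if r ≤ (2:ℝ) ^ (-k) then ENNReal.ofReal (((2:ℝ) ^ (-k)) ^ (-lam)) else 0) ≤
      ENNReal.ofReal (r ^ (-lam) / (1 - 2 ^ (-lam))) := by
  set k₀ := Int.log 2 r⁻¹
  have hk : ∀ k : ℤ, r ≤ (2:ℝ) ^ (-k) ↔ k ≤ k₀ := fun k => by
    rw [zpow_neg, le_inv_comm₀ hr (by positivity), ← Int.zpow_le_iff_le_log one_lt_two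
      (inv_pos.mpr hr), Nat.cast_ofNat]
  -- writing `k = k₀ - m`, the sum is dominated by a geometric series in `m`
  have hterm : ∀ m : ℕ, ((2:ℝ) ^ (-(k₀ - m))) ^ (-lam) ≤ r ^ (-lam) * ((2:ℝ) ^ (-lam)) ^ m := by
    intro m
    have hsplit : (2:ℝ) ^ (-(k₀ - m)) = 2 ^ (-k₀) * 2 ^ m := by
      rw [neg_sub, sub_eq_neg_add, zpow_add₀ two_ne_zero, zpow_natCast]
    rw [hsplit, Real.mul_rpow (by positivity) (by positivity), Real.rpow_pow_comm zero_le_two]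
    exact mul_le_mul_of_nonneg_right
      (Real.rpow_le_rpow_of_nonpos hr ((hk k₀).mpr le_rfl) (neg_nonpos.mpr hlam.le))
      (by positivity)
  calc _ ≤ ∑' m : ℕ, ENNReal.ofReal (r ^ (-lam)) * ENNReal.ofReal (2 ^ (-lam)) ^ m := by
        have hsupp : ∀ k : ℤ, (if r ≤ (2:ℝ) ^ (-k) then
            ENNReal.ofReal (((2:ℝ) ^ (-k)) ^ (-lam)) else 0) ≠ 0 → k ≤ k₀ :=
          fun k hk' => (hk k).mp (by_contra fun h => hk' (if_neg h))
        refine ENNReal.tsum_le_tsum_of_injOn (fun k => (k₀ - k).toNat) ?_ ?_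
        · intro k hk' l hl' hkl
          have := hsupp k hk'
          have := hsupp l hl'
          simp only at hkl
          omega
        · intro k hk'
          rw [if_pos ((hk k).mpr (hsupp k hk')), ← ENNReal.ofReal_pow (by positivity),
            ← ENNReal.ofReal_mul (by positivity)]
          refine ENNReal.ofReal_le_ofReal ((le_of_eq ?_).trans (hterm _))
          have := hsupp k hk'
          congr 3
          omega
    _ = ENNReal.ofReal (r ^ (-lam) / (1 - 2 ^ (-lam))) := by
        rw [ENNReal.tsum_mul_left, ENNReal.tsum_geometric, div_eq_mul_inv,
          ENNReal.ofReal_mul (by positivity), ← ENNReal.ofReal_one,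
          ← ENNReal.ofReal_sub _ (by positivity),
          ENNReal.ofReal_inv_of_pos (one_sub_two_rpow_neg_pos hlam)]

namespace Cube

variable {n : ℕ}

theorem measurableSet_set (I : Cube n) : MeasurableSet I.set := by
  have h : I.set = ⋂ l, (fun x : EuclideanSpace ℝ (Fin n) => x l) ⁻¹'
      Ico (I.corner l) (I.corner l + I.side) := by
    ext x
    simp [Cube.set]
  rw [h]
  exact MeasurableSet.iInter fun l => (PiLp.continuous_apply 2 _ l).measurable measurableSet_Ico

theorem corner_mem_set (I : Cube n) : I.corner ∈ I.set :=
  fun _ => ⟨le_rfl, lt_add_of_pos_right _ I.side_pos⟩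

theorem norm_sub_le_of_mem {I : Cube n} {x y : EuclideanSpace ℝ (Fin n)}
    (hx : x ∈ I.set) (hy : y ∈ I.set) : ‖x - y‖ ≤ √n * I.side := by
  have hcoord : ∀ l, ‖(x - y) l‖ ^ 2 ≤ I.side ^ 2 := fun l => by
    rw [PiLp.sub_apply, Real.norm_eq_abs, sq_abs]
    exact sq_le_sq' (by linarith [hx l, hy l]) (by linarith [hx l, hy l])
  calc ‖x - y‖ = √(∑ l, ‖(x - y) l‖ ^ 2) := EuclideanSpace.norm_eq _
    _ ≤ √(∑ _l : Fin n, I.side ^ 2) := Real.sqrt_le_sqrt (Finset.sum_le_sum fun l _ => hcoord l)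
    _ = √n * I.side := by
        rw [Finset.sum_const, Finset.card_univ, Fintype.card_fin, nsmul_eq_mul,
          Real.sqrt_mul (Nat.cast_nonneg _), Real.sqrt_sq I.side_pos.le]

theorem vol_pos (I : Cube n) : 0 < I.vol := pow_pos I.side_pos n

theorem vol_rpow_div (I : Cube n) (hn : n ≠ 0) (lam : ℝ) : I.vol ^ (lam / n) = I.side ^ lam := by
  rw [Cube.vol, ← Real.rpow_natCast, ← Real.rpow_mul I.side_pos.le,
    mul_div_cancel₀ _ (Nat.cast_ne_zero.mpr hn)]

def scale (K : Cube n) : ℤ := -Int.log 2 K.side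

end Cube

theorem abs_haar1_le {c s : ℝ} (hs : 0 ≤ s) (η : Bool) (t : ℝ) :
    |haar1 c s η t| ≤ s ^ (-(1:ℝ)/2) := by
  have h0 : 0 ≤ s ^ (-(1:ℝ)/2) := Real.rpow_nonneg hs _
  cases η <;> simp only [haar1, Bool.false_eq_true, if_false, if_true] <;> split_ifs <;>
    simp [abs_of_nonneg h0, h0]

theorem haar1_eq_zero_of_notMem {c s t : ℝ} (hs : 0 ≤ s) (η : Bool) (ht : t ∉ Ico c (c + s)) :
    haar1 c s η t = 0 := by
  have h₁ : t ∉ Ico c (c + s / 2) := fun h => ht ⟨h.1, by linarith [h.2]⟩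
  have h₂ : t ∉ Ico (c + s / 2) (c + s) := fun h => ht ⟨by linarith [h.1], h.2⟩
  cases η <;> simp [haar1, h₁, h₂, ht]

theorem haarCube_eq_zero_of_notMem {n : ℕ} {I : Cube n} (η : Fin n → Bool)
    {x : EuclideanSpace ℝ (Fin n)} (hx : x ∉ I.set) : haarCube I η x = 0 := by
  simp only [Cube.set, mem_ofPred_eq, not_forall] at hx
  obtain ⟨l, hl⟩ := hx
  exact Finset.prod_eq_zero (Finset.mem_univ l) (haar1_eq_zero_of_notMem I.side_pos.le _ hl)

theorem abs_haarCube_le {n : ℕ} (I : Cube n) (η : Fin n → Bool) (x : EuclideanSpace ℝ (Fin n)) :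
    |haarCube I η x| ≤ I.vol ^ (-(1:ℝ)/2) :=
  calc |haarCube I η x| = ∏ l, |haar1 (I.corner l) I.side (η l) (x l)| := Finset.abs_prod _ _
    _ ≤ ∏ _l : Fin n, I.side ^ (-(1:ℝ)/2) :=
        Finset.prod_le_prod (fun _ _ => abs_nonneg _) fun _ _ => abs_haar1_le I.side_pos.le _ _
    _ = I.vol ^ (-(1:ℝ)/2) := by
        rw [Finset.prod_const, Finset.card_univ, Fintype.card_fin,
          Real.rpow_pow_comm I.side_pos.le, Cube.vol]

theorem ofReal_abs_integral_mul_haarCube_le {n : ℕ} (I : Cube n) (η : Fin n → Bool)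
    (f : EuclideanSpace ℝ (Fin n) → ℝ) :
    ENNReal.ofReal |∫ y, f y * haarCube I η y| ≤
      ENNReal.ofReal (I.vol ^ (-(1:ℝ)/2)) * ∫⁻ y in I.set, ENNReal.ofReal |f y| := by
  have hpointwise : ∀ y, ENNReal.ofReal |f y * haarCube I η y| ≤
      I.set.indicator (fun y => ENNReal.ofReal (I.vol ^ (-(1:ℝ)/2)) * ENNReal.ofReal |f y|) y := by
    intro y
    by_cases hy : y ∈ I.set
    · rw [indicator_of_mem hy, abs_mul, mul_comm, ENNReal.ofReal_mul (abs_nonneg _)]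
      exact mul_le_mul_left (ENNReal.ofReal_le_ofReal (abs_haarCube_le I η y)) _
    · simp [haarCube_eq_zero_of_notMem η hy]
  calc ENNReal.ofReal |∫ y, f y * haarCube I η y|
      ≤ ∫⁻ y, ENNReal.ofReal |f y * haarCube I η y| := by
        simpa only [Real.enorm_eq_ofReal_abs] using
          enorm_integral_le_lintegral_enorm (fun y => f y * haarCube I η y)
    _ ≤ ∫⁻ y in I.set, ENNReal.ofReal (I.vol ^ (-(1:ℝ)/2)) * ENNReal.ofReal |f y| := by
        rw [← lintegral_indicator I.measurableSet_set]
        exact lintegral_mono hpointwise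
    _ = _ := lintegral_const_mul' _ _ ENNReal.ofReal_ne_top

theorem ofReal_shift_term_le {n : ℕ} (I J : Cube n) (ηI ηJ : Fin n → Bool) {a c : ℝ}
    (ha : |a| ≤ I.vol ^ ((1:ℝ)/2) * J.vol ^ ((1:ℝ)/2) * c)
    (f : EuclideanSpace ℝ (Fin n) → ℝ) (x : EuclideanSpace ℝ (Fin n)) :
    ENNReal.ofReal (|a| * |∫ y, f y * haarCube I ηI y| * |haarCube J ηJ x|) ≤
      ENNReal.ofReal c * ∫⁻ y in I.set, ENNReal.ofReal |f y| := by
  have hhalf : ∀ Q : Cube n, Q.vol ^ ((1:ℝ)/2) * Q.vol ^ (-(1:ℝ)/2) = 1 := fun Q => by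
    rw [← Real.rpow_add Q.vol_pos]
    norm_num
  have hcancel : |a| * |haarCube J ηJ x| * I.vol ^ (-(1:ℝ)/2) ≤ c :=
    calc |a| * |haarCube J ηJ x| * I.vol ^ (-(1:ℝ)/2)
        ≤ I.vol ^ ((1:ℝ)/2) * J.vol ^ ((1:ℝ)/2) * c * J.vol ^ (-(1:ℝ)/2) *
            I.vol ^ (-(1:ℝ)/2) := by
          have hJ := abs_haarCube_le J ηJ x
          have hc : 0 ≤ I.vol ^ ((1:ℝ)/2) * J.vol ^ ((1:ℝ)/2) * c := (abs_nonneg a).trans ha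
          gcongr
          exact Real.rpow_nonneg I.vol_pos.le _
      _ = c * (I.vol ^ ((1:ℝ)/2) * I.vol ^ (-(1:ℝ)/2)) *
            (J.vol ^ ((1:ℝ)/2) * J.vol ^ (-(1:ℝ)/2)) := by ring
      _ = c := by rw [hhalf, hhalf, mul_one, mul_one]
  calc ENNReal.ofReal (|a| * |∫ y, f y * haarCube I ηI y| * |haarCube J ηJ x|)
      = ENNReal.ofReal (|a| * |haarCube J ηJ x|) *
          ENNReal.ofReal |∫ y, f y * haarCube I ηI y| := by
        rw [mul_right_comm, ENNReal.ofReal_mul (by positivity)]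
    _ ≤ ENNReal.ofReal (|a| * |haarCube J ηJ x|) *
          (ENNReal.ofReal (I.vol ^ (-(1:ℝ)/2)) * ∫⁻ y in I.set, ENNReal.ofReal |f y|) := by
        gcongr
        exact ofReal_abs_integral_mul_haarCube_le I ηI f
    _ = ENNReal.ofReal (|a| * |haarCube J ηJ x| * I.vol ^ (-(1:ℝ)/2)) *
          ∫⁻ y in I.set, ENNReal.ofReal |f y| := by
        rw [← mul_assoc, ← ENNReal.ofReal_mul (by positivity)]
    _ ≤ ENNReal.ofReal c * ∫⁻ y in I.set, ENNReal.ofReal |f y| := by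
        gcongr

def descendants {n : ℕ} (D : Set (Cube n)) (K : Cube n) (i : ℕ) : Set (Cube n) :=
  {I | I ∈ D ∧ I.set ⊆ K.set ∧ K.side = 2 ^ i * I.side}

namespace IsDyadicGrid

variable {n : ℕ} {D : Set (Cube n)}

def cubeAt (hD : IsDyadicGrid D) (k : ℤ) (x : EuclideanSpace ℝ (Fin n)) : Cube n :=
  (hD.2.1 k x).exists.choose

theorem cubeAt_spec (hD : IsDyadicGrid D) (k : ℤ) (x : EuclideanSpace ℝ (Fin n)) :
    hD.cubeAt k x ∈ D ∧ (hD.cubeAt k x).side = 2 ^ (-k) ∧ x ∈ (hD.cubeAt k x).set :=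
  (hD.2.1 k x).exists.choose_spec

theorem eq_cubeAt (hD : IsDyadicGrid D) {I : Cube n} {k : ℤ} {x : EuclideanSpace ℝ (Fin n)}
    (hI : I ∈ D) (hs : I.side = 2 ^ (-k)) (hx : x ∈ I.set) : I = hD.cubeAt k x :=
  (hD.2.1 k x).unique ⟨hI, hs, hx⟩ (hD.cubeAt_spec k x)

theorem side_eq (hD : IsDyadicGrid D) {K : Cube n} (hK : K ∈ D) : K.side = 2 ^ (-K.scale) := by
  obtain ⟨k, hk⟩ := hD.1 K hK
  rw [Cube.scale, hk, neg_neg, ← Nat.cast_ofNat (R := ℝ), Int.log_zpow one_lt_two]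

theorem side_eq_of_side_eq_two_pow_mul (hD : IsDyadicGrid D) {K I : Cube n} {i : ℕ} (hK : K ∈ D)
    (hKI : K.side = 2 ^ i * I.side) : I.side = 2 ^ (-(K.scale + i)) := by
  rw [neg_add, zpow_add₀ two_ne_zero, ← hD.side_eq hK, hKI, zpow_neg, zpow_natCast]
  field_simp

theorem disjoint_of_side_eq (hD : IsDyadicGrid D) {I J : Cube n} (hI : I ∈ D) (hJ : J ∈ D)
    (hs : I.side = J.side) (hne : I ≠ J) : Disjoint I.set J.set := by
  obtain ⟨k, hk⟩ := hD.1 I hI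
  rcases hD.2.2 I hI J hJ with h | h | h
  · exact absurd ((hD.eq_cubeAt hI hk I.corner_mem_set).trans
      (hD.eq_cubeAt hJ (hs ▸ hk) (h I.corner_mem_set)).symm) hne
  · exact absurd ((hD.eq_cubeAt hI hk (h J.corner_mem_set)).trans
      (hD.eq_cubeAt hJ (hs ▸ hk) J.corner_mem_set).symm) hne
  · exact h

theorem tsum_setLIntegral_descendants_le (hD : IsDyadicGrid D) (K : Cube n) (i : ℕ)
    (g : EuclideanSpace ℝ (Fin n) → ℝ≥0∞) :
    ∑' I : descendants D K i, ∫⁻ y in I.1.set, g y ≤ ∫⁻ y in K.set, g y := by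
  refine tsum_setLIntegral_le_of_pairwiseDisjoint (fun I => I.1.measurableSet_set) ?_
    K.measurableSet_set (fun I => I.2.2.1) g
  intro I J hne
  refine hD.disjoint_of_side_eq I.2.1 J.2.1 ?_ (Subtype.coe_injective.ne hne)
  exact mul_left_cancel₀ (by positivity) (I.2.2.2.symm.trans J.2.2.2)

/-- The dyadic model `∑_{Q ∋ x} ℓ(Q)^{-λ} 1_Q(y)` of the kernel `|x - y|^{-λ}`. -/
def dyadicKernel (hD : IsDyadicGrid D) (lam : ℝ) (x y : EuclideanSpace ℝ (Fin n)) : ℝ≥0∞ :=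
  ∑' k : ℤ, (hD.cubeAt k x).set.indicator (fun _ => ENNReal.ofReal (((2:ℝ) ^ (-k)) ^ (-lam))) y

theorem dyadicKernel_le (hD : IsDyadicGrid D) (hn : 0 < n) {lam : ℝ} (hlam : 0 < lam)
    (x y : EuclideanSpace ℝ (Fin n)) :
    hD.dyadicKernel lam x y ≤
      ENNReal.ofReal (√n ^ lam / (1 - 2 ^ (-lam))) * (ENNReal.ofReal (‖x - y‖ ^ lam))⁻¹ := by
  have hsqrt : 0 < √(n : ℝ) := Real.sqrt_pos.mpr (Nat.cast_pos.mpr hn)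
  rcases eq_or_ne x y with rfl | hxy
  · rw [sub_self, norm_zero, Real.zero_rpow hlam.ne', ENNReal.ofReal_zero, ENNReal.inv_zero,
      ENNReal.mul_top (ENNReal.ofReal_pos.mpr
        (div_pos (by positivity) (one_sub_two_rpow_neg_pos hlam))).ne']
    exact le_top
  have hxy' : 0 < ‖x - y‖ := norm_pos_iff.mpr (sub_ne_zero.mpr hxy)
  set r := ‖x - y‖ / √n
  calc hD.dyadicKernel lam x y
      ≤ ∑' k : ℤ, (if r ≤ (2:ℝ) ^ (-k) then ENNReal.ofReal (((2:ℝ) ^ (-k)) ^ (-lam)) else 0) := by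
        refine ENNReal.tsum_le_tsum fun k => ?_
        by_cases hy : y ∈ (hD.cubeAt k x).set
        · obtain ⟨-, hside, hx⟩ := hD.cubeAt_spec k x
          have hdist := Cube.norm_sub_le_of_mem hx hy
          rw [hside] at hdist
          rw [indicator_of_mem hy, if_pos ((div_le_iff₀' hsqrt).mpr hdist)]
        · rw [indicator_of_notMem hy]
          exact zero_le
    _ ≤ ENNReal.ofReal (r ^ (-lam) / (1 - 2 ^ (-lam))) :=
        tsum_dyadic_rpow_neg_le hlam (div_pos hxy' hsqrt)
    _ = _ := by
        rw [← ENNReal.ofReal_inv_of_pos (by positivity),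
          ← ENNReal.ofReal_mul (div_nonneg (by positivity) (one_sub_two_rpow_neg_pos hlam).le),
          Real.rpow_neg (by positivity), Real.div_rpow hxy'.le hsqrt.le]
        congr 1
        field_simp

/-- The triples `(K, I, J)` with `I⁽ⁱ⁾ = K = J⁽ʲ⁾` indexing the shift `S^{i,j}`. -/
def shiftTriples (D : Set (Cube n)) (i j : ℕ) : Set (Cube n × Cube n × Cube n) :=
  {T | T.1 ∈ D ∧ T.2.1 ∈ D ∧ T.2.2 ∈ D ∧
    T.2.1.set ⊆ T.1.set ∧ T.1.side = 2 ^ i * T.2.1.side ∧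
    T.2.2.set ⊆ T.1.set ∧ T.1.side = 2 ^ j * T.2.2.side}

def shiftTerm (a : Cube n → Cube n → Cube n → ℝ) (sig : Cube n → Fin n → Bool)
    (f : EuclideanSpace ℝ (Fin n) → ℝ) (x : EuclideanSpace ℝ (Fin n))
    (T : Cube n × Cube n × Cube n) : ℝ≥0∞ :=
  ENNReal.ofReal (|a T.1 T.2.1 T.2.2| * |∫ y, f y * haarCube T.2.1 (sig T.2.1) y| *
    |haarCube T.2.2 (sig T.2.2) x|)

theorem tsum_shiftTerm_le (hD : IsDyadicGrid D) (hn : 0 < n) {lam : ℝ} {i j : ℕ}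
    {a : Cube n → Cube n → Cube n → ℝ}
    (ha : ∀ K I J : Cube n, K ∈ D → I ∈ D → J ∈ D →
      |a K I J| ≤ I.vol ^ ((1:ℝ)/2) * J.vol ^ ((1:ℝ)/2) / K.vol ^ (lam / n))
    (sig : Cube n → Fin n → Bool) (f : EuclideanSpace ℝ (Fin n) → ℝ)
    (x : EuclideanSpace ℝ (Fin n)) :
    ∑' T : shiftTriples D i j, shiftTerm a sig f x T ≤
    ∑' p : ℤ × Cube n, (descendants D (hD.cubeAt p.1 x) i).indicator
      (fun I => ENNReal.ofReal (((2:ℝ) ^ (-p.1)) ^ (-lam)) * ∫⁻ y in I.set, ENNReal.ofReal |f y|)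
      p.2 := by
  -- a nonzero term forces `x ∈ J`, which pins down `K` and `J` from the scale of `K`
  have hpinned : ∀ T ∈ Function.support fun T : shiftTriples D i j => shiftTerm a sig f x T,
      T.1.1 = hD.cubeAt T.1.1.scale x ∧ T.1.2.2 = hD.cubeAt (T.1.1.scale + j) x := by
    rintro ⟨⟨K, I, J⟩, hK, _, hJ, _, _, hJK, hKJ⟩ hT
    have hxJ : x ∈ J.set :=
      by_contra fun h => hT (by simp [shiftTerm, haarCube_eq_zero_of_notMem _ h])
    exact ⟨hD.eq_cubeAt hK (hD.side_eq hK) (hJK hxJ),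
      hD.eq_cubeAt hJ (hD.side_eq_of_side_eq_two_pow_mul hK hKJ) hxJ⟩
  refine ENNReal.tsum_le_tsum_of_injOn (fun T => (T.1.1.scale, T.1.2.1)) ?_ ?_
  · intro T hT T' hT' hTT'
    obtain ⟨hscale, hI⟩ := Prod.mk.inj hTT'
    obtain ⟨hK, hJ⟩ := hpinned T hT
    obtain ⟨hK', hJ'⟩ := hpinned T' hT'
    refine Subtype.ext (Prod.ext ?_ (Prod.ext hI ?_))
    · rw [hK, hK', hscale]
    · rw [hJ, hJ', hscale]
  · rintro ⟨⟨K, I, J⟩, hK, hI, hJ, hIK, hKI, _, _⟩ hT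
    have hKx : K = hD.cubeAt K.scale x := (hpinned _ hT).1
    have hc : |a K I J| ≤
        I.vol ^ ((1:ℝ)/2) * J.vol ^ ((1:ℝ)/2) * ((2:ℝ) ^ (-K.scale)) ^ (-lam) := by
      rw [← hD.side_eq hK, Real.rpow_neg K.side_pos.le, ← K.vol_rpow_div hn.ne',
        ← div_eq_mul_inv]
      exact ha K I J hK hI hJ
    rw [indicator_of_mem (show I ∈ descendants D (hD.cubeAt K.scale x) i from
      ⟨hI, hKx ▸ hIK, hKx ▸ hKI⟩)]
    exact ofReal_shift_term_le I J _ _ hc f x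

end IsDyadicGrid

theorem fractional_shift_dominated_by_fractional_integral_general
    (n : ℕ) (hn : 0 < n) (lam : ℝ) (hlam0 : 0 < lam) (i j : ℕ) :
    ∃ C : ℝ, 0 < C ∧ ∀ (D : _root_.Set (Cube n)), IsDyadicGrid D →
      ∀ a : Cube n → Cube n → Cube n → ℝ,
        (∀ K I J : Cube n, K ∈ D → I ∈ D → J ∈ D →
          |a K I J| ≤ I.vol ^ ((1:ℝ)/2) * J.vol ^ ((1:ℝ)/2) / K.vol ^ (lam / n)) →
      ∀ sig : Cube n → Fin n → Bool,
      ∀ f : EuclideanSpace ℝ (Fin n) → ℝ,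
        ∀ᵐ x : EuclideanSpace ℝ (Fin n) ∂volume,
          (∑' T : {T : Cube n × Cube n × Cube n //
              T.1 ∈ D ∧ T.2.1 ∈ D ∧ T.2.2 ∈ D ∧
              T.2.1.set ⊆ T.1.set ∧ T.1.side = 2 ^ i * T.2.1.side ∧
              T.2.2.set ⊆ T.1.set ∧ T.1.side = 2 ^ j * T.2.2.side},
            ENNReal.ofReal (|a T.1.1 T.1.2.1 T.1.2.2| *
              |∫ y, f y * haarCube T.1.2.1 (sig T.1.2.1) y| *
              |haarCube T.1.2.2 (sig T.1.2.2) x|)) ≤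
          ENNReal.ofReal C *
            ∫⁻ y, ENNReal.ofReal |f y| / ENNReal.ofReal (‖x - y‖ ^ lam) := by
  refine ⟨√n ^ lam / (1 - 2 ^ (-lam)), div_pos (by positivity) (one_sub_two_rpow_neg_pos hlam0),
    fun D hD a ha sig f => ae_of_all _ fun x => ?_⟩
  set g := fun y => ENNReal.ofReal |f y|
  set w : ℤ → ℝ≥0∞ := fun k => ENNReal.ofReal (((2:ℝ) ^ (-k)) ^ (-lam))
  calc _ ≤ ∑' p : ℤ × Cube n, (descendants D (hD.cubeAt p.1 x) i).indicator
          (fun I => w p.1 * ∫⁻ y in I.set, g y) p.2 := hD.tsum_shiftTerm_le hn ha sig f x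
    _ = ∑' k : ℤ, w k * ∑' I : descendants D (hD.cubeAt k x) i, ∫⁻ y in I.1.set, g y := by
        rw [ENNReal.tsum_prod']
        simp_rw [← tsum_subtype, ENNReal.tsum_mul_left]
    _ ≤ ∑' k : ℤ, w k * ∫⁻ y in (hD.cubeAt k x).set, g y := by
        gcongr with k
        exact hD.tsum_setLIntegral_descendants_le _ i g
    _ ≤ ∫⁻ y, hD.dyadicKernel lam x y * g y :=
        tsum_mul_setLIntegral_le (fun k => (hD.cubeAt k x).measurableSet_set) w g
    _ ≤ ∫⁻ y, ENNReal.ofReal (√n ^ lam / (1 - 2 ^ (-lam))) *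
          (g y / ENNReal.ofReal (‖x - y‖ ^ lam)) := by
        refine lintegral_mono fun y => ?_
        rw [ENNReal.div_eq_inv_mul, ← mul_assoc]
        exact mul_le_mul_left (hD.dyadicKernel_le hn hlam0 x y) _
    _ = _ := lintegral_const_mul' _ _ ENNReal.ofReal_ne_top

/-- Pointwise domination of a fractional dyadic shift by the fractional
integral: if `S^{i,j}_λ f = ∑_{K ∈ 𝒟} ∑_{I^{(i)}=K, J^{(j)}=K} a_{I,J,K} ⟨f,h_I⟩ h_J` with
`|a_{I,J,K}| ≤ |I|^{1/2}|J|^{1/2}/|K|^{λ/n}`, then `|S^{i,j}_λ f(x)| ≲_{λ,n} I_λ|f|(x)` a.e.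
(stated in the strong form where the shift is summed with absolute values). -/
theorem fractional_shift_dominated_by_fractional_integral
    (n : ℕ) (hn : 0 < n) (lam : ℝ) (hlam0 : 0 < lam) (hlamn : lam < n) (i j : ℕ) :
    ∃ C : ℝ, 0 < C ∧ ∀ (D : _root_.Set (Cube n)), IsDyadicGrid D →
      ∀ a : Cube n → Cube n → Cube n → ℝ,
        (∀ K I J : Cube n, K ∈ D → I ∈ D → J ∈ D →
          |a K I J| ≤ I.vol ^ ((1:ℝ)/2) * J.vol ^ ((1:ℝ)/2) / K.vol ^ (lam / n)) →
      ∀ sig : Cube n → Fin n → Bool,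
      ∀ f : EuclideanSpace ℝ (Fin n) → ℝ,
        ∀ᵐ x : EuclideanSpace ℝ (Fin n) ∂volume,
          (∑' T : {T : Cube n × Cube n × Cube n //
              T.1 ∈ D ∧ T.2.1 ∈ D ∧ T.2.2 ∈ D ∧
              T.2.1.set ⊆ T.1.set ∧ T.1.side = 2 ^ i * T.2.1.side ∧
              T.2.2.set ⊆ T.1.set ∧ T.1.side = 2 ^ j * T.2.2.side},
            ENNReal.ofReal (|a T.1.1 T.1.2.1 T.1.2.2| *
              |∫ y, f y * haarCube T.1.2.1 (sig T.1.2.1) y| *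
              |haarCube T.1.2.2 (sig T.1.2.2) x|)) ≤
          ENNReal.ofReal C *
            ∫⁻ y, ENNReal.ofReal |f y| / ENNReal.ofReal (‖x - y‖ ^ lam) :=
  fractional_shift_dominated_by_fractional_integral_general n hn lam hlam0 i j
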